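/- There exists a (unique) Lie algebra structure on the 9-dimensional complex vector space m with basis v₁, v₂, v₃, v₄, v₂₃, v₃₄, v₂₃₃, v₂₃₄, v₂₃₃₄ determined by the following brackets of basis vectors (all brackets of basis vectors not listed, and not forced by antisymmetry, are zero): [v₂,v₃] = v₂₃, [v₃,v₄] = v₃₄, [v₂₃,v₃] = v₂₃₃, [v₂,v₃₄] = v₂₃₄, [v₂₃,v₄] = v₂₃₄, [v₂₃,v₃₄] = (1/2)v₂₃₃₄, [v₂₃₃,v₄] = v₂₃₃₄, [v₂₃₄,v₃] = (1/2)v₂₃₃₄, and [v₁, x] = 0 for all x. That is, this bilinear antisymmetric bracket satisfies the Jacobi identity, and the resulting Lie algebra m is nilpotent, graded by m_{-1} = ⟨v₁,v₂,v₃,v₄⟩, m_{-2} = ⟨v₂₃,v₃₄⟩, m_{-3} = ⟨v₂₃₃,v₂₃₄⟩, m_{-4} = ⟨v₂₃₃₄⟩ with [m_{-i}, m_{-j}] ⊆ m_{-i-j}. -/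
import Mathlib


noncomputable section

/-- Standard basis vectors of `ℂ^9`; indices `0,…,8` correspond to
`v₁, v₂, v₃, v₄, v₂₃, v₃₄, v₂₃₃, v₂₃₄, v₂₃₃₄`. -/
def e (i : Fin 9) : Fin 9 → ℂ := Pi.single i 1

/-- One-sided table of structure constants (the listed brackets). -/
def sc : Fin 9 → Fin 9 → (Fin 9 → ℂ) := fun i j =>
  if i = 1 ∧ j = 2 then e 4                -- [v₂,v₃] = v₂₃
  else if i = 2 ∧ j = 3 then e 5           -- [v₃,v₄] = v₃₄
  else if i = 4 ∧ j = 2 then e 6           -- [v₂₃,v₃] = v₂₃₃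
  else if i = 1 ∧ j = 5 then e 7           -- [v₂,v₃₄] = v₂₃₄
  else if i = 4 ∧ j = 3 then e 7           -- [v₂₃,v₄] = v₂₃₄
  else if i = 4 ∧ j = 5 then (1/2 : ℂ) • e 8  -- [v₂₃,v₃₄] = ½·v₂₃₃₄
  else if i = 6 ∧ j = 3 then e 8           -- [v₂₃₃,v₄] = v₂₃₃₄
  else if i = 7 ∧ j = 2 then (1/2 : ℂ) • e 8  -- [v₂₃₄,v₃] = ½·v₂₃₃₄
  else 0

/-- Antisymmetrized structure constants. -/
def c (i j : Fin 9) : Fin 9 → ℂ := sc i j - sc j i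

/-- The bilinear bracket on `ℂ^9` determined by the structure constants. -/
def br (x y : Fin 9 → ℂ) : Fin 9 → ℂ := ∑ i, ∑ j, (x i * y j) • c i j

/-- The grading `m₋₁, m₋₂, m₋₃, m₋₄` of `m`. -/
def mGrade : ℕ → Submodule ℂ (Fin 9 → ℂ) := fun k =>
  if k = 1 then Submodule.span ℂ {e 0, e 1, e 2, e 3}
  else if k = 2 then Submodule.span ℂ {e 4, e 5}
  else if k = 3 then Submodule.span ℂ {e 6, e 7}
  else if k = 4 then Submodule.span ℂ {e 8}
  else ⊥

lemma sum_univ_nine {M : Type*} [AddCommMonoid M] (f : Fin 9 → M) :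
    ∑ i, f i = f 0 + f 1 + f 2 + f 3 + f 4 + f 5 + f 6 + f 7 + f 8 := by
  rw [Fin.sum_univ_castSucc, Fin.sum_univ_eight]; rfl

lemma br_apply (x y : Fin 9 → ℂ) (k : Fin 9) :
    br x y k = ∑ i, ∑ j, x i * y j * c i j k := by
  simp [br, Finset.sum_apply]

/-- Closed formula for the bracket. -/
def brF (x y : Fin 9 → ℂ) : Fin 9 → ℂ := fun k =>
  if k = 4 then x 1 * y 2 - x 2 * y 1
  else if k = 5 then x 2 * y 3 - x 3 * y 2
  else if k = 6 then x 4 * y 2 - x 2 * y 4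
  else if k = 7 then x 1 * y 5 - x 5 * y 1 + (x 4 * y 3 - x 3 * y 4)
  else if k = 8 then (1/2)*(x 4 * y 5 - x 5 * y 4) + (x 6 * y 3 - x 3 * y 6)
      + (1/2)*(x 7 * y 2 - x 2 * y 7)
  else 0

lemma br_eq (x y : Fin 9 → ℂ) : br x y = brF x y := by
  funext k
  rw [br_apply]
  simp only [sum_univ_nine]
  fin_cases k <;> simp [c, sc, e, brF, Pi.single_apply] <;> ring

lemma br_e_e (a b : Fin 9) : br (e a) (e b) = c a b := by
  funext k
  rw [br_apply]
  simp [e, Pi.single_apply, ite_mul, Finset.sum_ite_eq]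

lemma br_add_left (x x' y : Fin 9 → ℂ) : br (x + x') y = br x y + br x' y := by
  simp [br, add_mul, add_smul, Finset.sum_add_distrib]

lemma br_smul_left (a : ℂ) (x y : Fin 9 → ℂ) : br (a • x) y = a • br x y := by
  simp [br, Finset.smul_sum, smul_smul, mul_assoc]

lemma br_add_right (x y y' : Fin 9 → ℂ) : br x (y + y') = br x y + br x y' := by
  simp [br, mul_add, add_smul, Finset.sum_add_distrib]

lemma br_smul_right (a : ℂ) (x y : Fin 9 → ℂ) : br x (a • y) = a • br x y := by
  simp [br, Finset.smul_sum, smul_smul, mul_assoc]; congr 1; ext i j; ring_nf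

lemma br_zero_left (y : Fin 9 → ℂ) : br 0 y = 0 := by simp [br]

lemma br_zero_right (x : Fin 9 → ℂ) : br x 0 = 0 := by simp [br]

lemma span_br {S T : Set (Fin 9 → ℂ)} {M : Submodule ℂ (Fin 9 → ℂ)}
    (h : ∀ a ∈ S, ∀ b ∈ T, br a b ∈ M) :
    ∀ x ∈ Submodule.span ℂ S, ∀ y ∈ Submodule.span ℂ T, br x y ∈ M := by
  intro x hx y hy
  induction hx using Submodule.span_induction with
  | mem a ha =>
    induction hy using Submodule.span_induction with
    | mem b hb => exact h a ha b hb
    | zero => rw [br_zero_right]; exact M.zero_mem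
    | add u v _ _ hu hv => rw [br_add_right]; exact M.add_mem hu hv
    | smul r u _ hu => rw [br_smul_right]; exact M.smul_mem r hu
  | zero => rw [br_zero_left]; exact M.zero_mem
  | add u v _ _ hu hv => rw [br_add_left]; exact M.add_mem hu hv
  | smul r u _ hu => rw [br_smul_left]; exact M.smul_mem r hu

/-- The bracket `br` realizes the listed bracket relations, is antisymmetric,
satisfies the Jacobi identity (so it defines a Lie algebra structure on
`ℂ^9`), is nilpotent of class `≤ 4`, and is graded with respect to `mGrade`. -/
theorem stmt_10 :
    (br (e 1) (e 2) = e 4) ∧ (br (e 2) (e 3) = e 5) ∧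
    (br (e 4) (e 2) = e 6) ∧ (br (e 1) (e 5) = e 7) ∧ (br (e 4) (e 3) = e 7) ∧
    (br (e 4) (e 5) = (1/2 : ℂ) • e 8) ∧ (br (e 6) (e 3) = e 8) ∧
    (br (e 7) (e 2) = (1/2 : ℂ) • e 8) ∧
    (∀ x, br (e 0) x = 0) ∧
    (∀ x y, br x y = - br y x) ∧
    (∀ x y z, br (br x y) z + br (br y z) x + br (br z x) y = 0) ∧
    (∀ x₁ x₂ x₃ x₄ x₅, br (br (br (br x₁ x₂) x₃) x₄) x₅ = 0) ∧
    (∀ i j : ℕ, ∀ x ∈ mGrade i, ∀ y ∈ mGrade j, br x y ∈ mGrade (i + j)) := by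
  refine ⟨?_, ?_, ?_, ?_, ?_, ?_, ?_, ?_, ?_, ?_, ?_, ?_, ?_⟩
  · rw [br_e_e]; simp [c, sc]
  · rw [br_e_e]; simp [c, sc]
  · rw [br_e_e]; simp [c, sc]
  · rw [br_e_e]; simp [c, sc]
  · rw [br_e_e]; simp [c, sc]
  · rw [br_e_e]; simp [c, sc]
  · rw [br_e_e]; simp [c, sc]
  · rw [br_e_e]; simp [c, sc]
  · intro x
    rw [br_eq]; funext k; fin_cases k <;> simp [brF, e, Pi.single_apply]
  · intro x y
    rw [br_eq, br_eq]; funext k; fin_cases k <;> simp [brF] <;> ring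
  · intro x y z
    simp only [br_eq]; funext k; fin_cases k <;> simp [brF] <;> ring
  · intro x₁ x₂ x₃ x₄ x₅
    simp only [br_eq]; funext k; fin_cases k <;> simp [brF]
  · have hbot : ∀ n : ℕ, n ≠ 1 → n ≠ 2 → n ≠ 3 → n ≠ 4 → mGrade n = ⊥ := by
      intro n h1 h2 h3 h4; simp [mGrade, h1, h2, h3, h4]
    intro i j x hx y hy
    by_cases hi : i = 1 ∨ i = 2 ∨ i = 3 ∨ i = 4
    swap
    · push_neg at hi
      rw [hbot i hi.1 hi.2.1 hi.2.2.1 hi.2.2.2, Submodule.mem_bot] at hx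
      rw [hx, br_zero_left]; exact zero_mem _
    by_cases hj : j = 1 ∨ j = 2 ∨ j = 3 ∨ j = 4
    swap
    · push_neg at hj
      rw [hbot j hj.1 hj.2.1 hj.2.2.1 hj.2.2.2, Submodule.mem_bot] at hy
      rw [hy, br_zero_right]; exact zero_mem _
    rcases hi with rfl | rfl | rfl | rfl <;> rcases hj with rfl | rfl | rfl | rfl <;>
      norm_num [mGrade] at hx hy <;>
      refine span_br ?_ x hx y hy <;>
      intro a ha b hb <;>
      simp only [Set.mem_insert_iff, Set.mem_singleton_iff] at ha hb <;>
      (first | (rcases ha with rfl | rfl | rfl | rfl) | (rcases ha with rfl | rfl) | (rcases ha with rfl)) <;>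
      (first | (rcases hb with rfl | rfl | rfl | rfl) | (rcases hb with rfl | rfl) | (rcases hb with rfl)) <;>
      rw [br_e_e] <;>
      simp [mGrade, c, sc] <;>
      all_goals (first | (apply Submodule.subset_span; simp; done) | (apply neg_mem; apply Submodule.subset_span; simp; done) | (apply Submodule.smul_mem; apply Submodule.subset_span; simp; done) | (apply neg_mem; apply Submodule.smul_mem; apply Submodule.subset_span; simp; done))

end
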